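/- arXiv:2010.11331 — 2 statements merged into one kernel-verified Lean document; each statement's English description precedes it below -/
import Mathlib

section
/- The X-ray transform over closed geodesics is injective on L¹(𝕋²): if f ∈ L¹(𝕋²) and for every v ∈ ℤ² \ {0} one has I_v f(x) = 0 for a.e. x ∈ 𝕋², then f = 0 almost everywhere. -/
noncomputable section
open MeasureTheory Real
open scoped ENNReal NNReal

instance : Fact ((0:ℝ) < 1) := ⟨one_pos⟩

/-- The flat torus `𝕋ⁿ = ℝⁿ/ℤⁿ`, with the probability Haar (Lebesgue) measure. -/
abbrev Torus (n : ℕ) := Fin n → AddCircle (1:ℝ)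

/-- The quotient map `π : ℝⁿ → 𝕋ⁿ`. -/
def tmap {n : ℕ} (x : Fin n → ℝ) : Torus n := fun i => (x i : AddCircle (1:ℝ))

/-- The character `x ↦ e^{2πi k·x}` on the torus. -/
def char {n : ℕ} (k : Fin n → ℤ) (x : Torus n) : ℂ := ∏ i, fourier (k i) (x i)

/-- The Fourier coefficient `f̂(k) = ∫ f(x) e^{−2πi k·x} dx`. -/
def fCoeff {n : ℕ} (f : Torus n → ℂ) (k : Fin n → ℤ) : ℂ := ∫ x, char (-k) x * f x

/-- The X-ray transform on `𝕋²` in direction `v ∈ ℤ² \ {0}`: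
`I_v f(x) = ∫₀¹ f(x + t v) dt`. -/
def xray (v : Fin 2 → ℤ) (f : Torus 2 → ℂ) (x : Torus 2) : ℂ :=
  ∫ t in (0:ℝ)..1, f (x + tmap fun i => t * (v i : ℝ))

/-! The character `e_k` is constant along every closed geodesic in a direction `v` with
`v ⬝ᵥ k = 0`, so by Fubini and translation invariance, pairing `I_v f` with `e_{-k}` returns
`f̂(k)`. Every `k ∈ ℤ²` admits such a `v ≠ 0`, hence all Fourier coefficients of `f` vanish.
Since trigonometric polynomials are dense in `C(𝕋², ℂ)`, `f` then integrates to zero against every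
continuous function, and approximating indicators of closed sets by continuous functions gives
`f = 0` a.e. -/

open Filter Topology
open scoped BoundedContinuousFunction

theorem ae_eq_zero_of_forall_integral_smul_eq_zero {X E : Type*} [TopologicalSpace X]
    [TopologicalSpace.PseudoMetrizableSpace X] [MeasurableSpace X] [BorelSpace X]
    [NormedAddCommGroup E] [NormedSpace ℝ E] [CompleteSpace E] {μ : Measure X} {f : X → E}
    (hf : Integrable f μ) (h : ∀ g : X →ᵇ ℝ≥0, ∫ x, (g x : ℝ) • f x ∂μ = 0) :
    f =ᵐ[μ] 0 := by
  refine ae_eq_zero_of_forall_setIntegral_isClosed_eq_zero hf fun F hF => ?_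
  have hlim : Tendsto (fun n => ∫ x, (hF.apprSeq n x : ℝ) • f x ∂μ) atTop
      (𝓝 (∫ x, F.indicator (fun _ => (1 : ℝ)) x • f x ∂μ)) := by
    refine tendsto_integral_of_dominated_convergence (fun x => ‖f x‖)
      (fun n => ?_) hf.norm (fun n => ?_) (ae_of_all _ fun x => ?_)
    · exact ((hF.apprSeq n).continuous.measurable.coe_nnreal_real.aestronglyMeasurable).smul hf.1
    · refine ae_of_all _ fun x => ?_
      simpa [norm_smul] using mul_le_of_le_one_left (norm_nonneg _)
        (HasOuterApproxClosed.apprSeq_apply_le_one hF n x)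
    · have := (NNReal.continuous_coe.tendsto _).comp
        (tendsto_pi_nhds.1 (HasOuterApproxClosed.tendsto_apprSeq hF) x)
      convert this.smul_const (f x) using 2 <;> by_cases hx : x ∈ F <;> simp [hx]
  simp_rw [h, tendsto_const_nhds_iff] at hlim
  rw [hlim, ← integral_indicator hF.measurableSet]
  congr with x
  by_cases hx : x ∈ F <;> simp [hx]

section CompactSpace

variable {X : Type*} [TopologicalSpace X] [CompactSpace X] [MeasurableSpace X]
  {μ : Measure X} {f : X → ℂ}

theorem MeasureTheory.Integrable.continuousMap_mul [OpensMeasurableSpace X]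
    (hf : Integrable f μ) (g : C(X, ℂ)) : Integrable (fun x => g x * f x) μ :=
  hf.bdd_mul g.continuous.aestronglyMeasurable (ae_of_all _ g.norm_coe_le_norm)

def integralMulCLM [OpensMeasurableSpace X] (hf : Integrable f μ) : C(X, ℂ) →L[ℂ] ℂ :=
  LinearMap.mkContinuous
    { toFun := fun g => ∫ x, g x * f x ∂μ
      map_add' := fun g g' => by
        simp only [ContinuousMap.add_apply, add_mul]
        exact integral_add (hf.continuousMap_mul g) (hf.continuousMap_mul g')
      map_smul' := fun c g => by
        simp only [ContinuousMap.smul_apply, smul_eq_mul, mul_assoc, RingHom.id_apply]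
        exact integral_const_mul c _ }
    (∫ x, ‖f x‖ ∂μ) fun g => by
      simp only [LinearMap.coe_mk, AddHom.coe_mk]
      calc ‖∫ x, g x * f x ∂μ‖ ≤ ∫ x, ‖g‖ * ‖f x‖ ∂μ :=
            norm_integral_le_of_norm_le (hf.norm.const_mul _) (ae_of_all _ fun x => by
              rw [norm_mul]; gcongr; exact g.norm_coe_le_norm x)
        _ = (∫ x, ‖f x‖ ∂μ) * ‖g‖ := by rw [integral_const_mul, mul_comm]

@[simp]
theorem integralMulCLM_apply [OpensMeasurableSpace X] (hf : Integrable f μ) (g : C(X, ℂ)) :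
    integralMulCLM hf g = ∫ x, g x * f x ∂μ :=
  rfl

theorem ae_eq_zero_of_forall_integral_mul_eq_zero [TopologicalSpace.PseudoMetrizableSpace X]
    [BorelSpace X] (hf : Integrable f μ) {S : Set C(X, ℂ)}
    (hS : (Submodule.span ℂ S).topologicalClosure = ⊤) (h : ∀ g ∈ S, ∫ x, g x * f x ∂μ = 0) :
    f =ᵐ[μ] 0 := by
  have hL : integralMulCLM hf = 0 :=
    ContinuousLinearMap.ext_on (Submodule.dense_iff_topologicalClosure_eq_top.2 hS) h
  refine ae_eq_zero_of_forall_integral_smul_eq_zero hf fun g => ?_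
  have := congr($hL ⟨fun x => ((g x : ℝ) : ℂ), by fun_prop⟩)
  rw [integralMulCLM_apply] at this
  simpa [Complex.real_smul] using this

end CompactSpace

section Torus

variable {n : ℕ}

theorem char_eq_mFourier (k : Fin n → ℤ) : char k = UnitAddTorus.mFourier k := rfl

theorem continuous_char (k : Fin n → ℤ) : Continuous (char k) :=
  (UnitAddTorus.mFourier k).continuous

theorem norm_char (k : Fin n → ℤ) (x : Torus n) : ‖char k x‖ = 1 := by
  simp only [char, fourier_apply, norm_prod, Circle.norm_coe, Finset.prod_const_one]

theorem char_add (k : Fin n → ℤ) (x y : Torus n) : char k (x + y) = char k x * char k y := by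
  simp only [char, Pi.add_apply, fourier_apply, smul_add, AddCircle.toCircle_add, Circle.coe_mul,
    Finset.prod_mul_distrib]

theorem continuous_tmap : Continuous (tmap (n := n)) :=
  continuous_pi fun i => (AddCircle.continuous_mk' 1).comp (continuous_apply i)

theorem char_tmap (k : Fin n → ℤ) (u : Fin n → ℝ) :
    char k (tmap u) = Complex.exp (2 * π * Complex.I * (∑ i, k i * u i : ℝ)) := by
  simp only [char, tmap, fourier_coe_apply, ← Complex.exp_sum]
  rw [Complex.ofReal_sum, Finset.mul_sum]
  congr! 2 with i
  push_cast
  ring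

theorem ae_eq_zero_of_fCoeff_eq_zero {f : Torus n → ℂ} (hf : Integrable f)
    (h : ∀ k, fCoeff f k = 0) : f =ᵐ[volume] 0 :=
  ae_eq_zero_of_forall_integral_mul_eq_zero hf UnitAddTorus.span_mFourier_closure_eq_top <| by
    rintro _ ⟨k, rfl⟩
    simpa [fCoeff, char_eq_mFourier] using h (-k)

theorem integral_char_mul_integral_comp_add {T : Type*} [MeasurableSpace T] {ρ : Measure T}
    [IsProbabilityMeasure ρ] {w : T → Torus n} (hw : Measurable w) {k : Fin n → ℤ}
    (hkw : ∀ t, char (-k) (w t) = 1) {f : Torus n → ℂ} (hf : Integrable f) :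
    ∫ x, char (-k) x * ∫ t, f (x + w t) ∂ρ = fCoeff f k := by
  have hshear : MeasurePreserving (fun q : T × Torus n => (q.1, q.2 + w q.1))
      (ρ.prod volume) (ρ.prod volume) :=
    (MeasurePreserving.id ρ).skew_product (measurable_snd.add (hw.comp measurable_fst))
      (ae_of_all _ fun t => map_add_right_eq_self volume (w t))
  have hint : Integrable (fun q : T × Torus n => char (-k) q.2 * f (q.2 + w q.1))
      (ρ.prod volume) := by
    refine Integrable.bdd_mul (c := 1) ?_ ?_ (ae_of_all _ fun q => (norm_char _ _).le)
    · exact (hshear.integrable_comp (hf.comp_snd ρ).1).2 (hf.comp_snd ρ)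
    · exact ((continuous_char (-k)).measurable.comp measurable_snd).aestronglyMeasurable
  have hslice : ∀ t, ∫ x, char (-k) x * f (x + w t) = fCoeff f k := fun t => by
    simpa only [char_add, hkw, mul_one, fCoeff] using
      integral_add_right_eq_self (fun x => char (-k) x * f x) (w t)
  calc ∫ x, char (-k) x * ∫ t, f (x + w t) ∂ρ
      = ∫ x, ∫ t, char (-k) x * f (x + w t) ∂ρ := by simp_rw [integral_const_mul]
    _ = ∫ t, ∫ x, char (-k) x * f (x + w t) ∂volume ∂ρ := integral_integral_swap hint.swap
    _ = fCoeff f k := by simp [hslice]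

end Torus

theorem integral_char_mul_xray {v k : Fin 2 → ℤ} (hvk : v ⬝ᵥ k = 0) {f : Torus 2 → ℂ}
    (hf : Integrable f) : ∫ x, char (-k) x * xray v f x = fCoeff f k := by
  have : IsProbabilityMeasure (volume.restrict (Set.Ioc (0 : ℝ) 1)) := ⟨by simp⟩
  simp only [xray, intervalIntegral.integral_of_le zero_le_one]
  refine integral_char_mul_integral_comp_add
    (continuous_tmap.comp (by fun_prop)).measurable (fun t => ?_) hf
  have : ∑ i, ((-k) i : ℝ) * (t * v i) = -t * ((v ⬝ᵥ k : ℤ) : ℝ) := by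
    simp only [dotProduct, Int.cast_sum, Int.cast_mul, Finset.mul_sum, Pi.neg_apply, Int.cast_neg]
    exact Finset.sum_congr rfl fun i _ => by ring
  rw [Function.comp_apply, char_tmap, this, hvk]
  simp

theorem xray_injective_on_L1
    (f : Torus 2 → ℂ) (hf : Integrable f (volume : Measure (Torus 2)))
    (h : ∀ v : Fin 2 → ℤ, v ≠ 0 → ∀ᵐ x : Torus 2, xray v f x = 0) :
    f =ᵐ[(volume : Measure (Torus 2))] 0 := by
  refine ae_eq_zero_of_fCoeff_eq_zero hf fun k => ?_
  obtain ⟨v, hv, hvk⟩ := exists_ne_zero_dotProduct_eq_zero k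
  rw [← integral_char_mul_xray hvk hf]
  refine integral_eq_zero_of_ae ?_
  filter_upwards [h v hv] with x hx
  simp [hx]
end
end

section
/- Suppose r, t, s, δ ∈ ℝ satisfy 2s + t ≥ r, s > 0, and 0 < δ < 2s, let ε > 0, 0 < α ≤ 2s/δ − 1, f ∈ H^{r+δ}(𝕋²), and g ∈ H^t(𝕋²×Q) with ‖g‖_{H^t(𝕋²×Q)} ≤ ε. Then ‖P^s_α I*(I f + g) − f‖_{H^r(𝕋²)} ≤ α^{δ/2s} C(δ/2s) ‖f‖_{H^{r+δ}(𝕋²)} + ε/α, where C(x) = x (x^{−1} − 1)^{1−x}. -/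
noncomputable section
open scoped ENNReal NNReal

/-- `⟨k⟩² = 1 + |k|²` for `k ∈ ℤ²`. -/
def nrmSq (k : Fin 2 → ℤ) : ℝ := 1 + ((k 0 : ℝ)^2 + (k 1 : ℝ)^2)

/-- The dot product on `ℤ²`. -/
def dotZ (k v : Fin 2 → ℤ) : ℤ := ∑ i, k i * v i

/-- The X-ray transform acting on Fourier coefficient sequences:
`(I a)(k,v) = a k` if `k ⊥ v` and `0` otherwise. -/
def IaQ (Q : Set (Fin 2 → ℤ)) (a : (Fin 2 → ℤ) → ℂ) (k : Fin 2 → ℤ) (v : Q) : ℂ :=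
  if dotZ k v.1 = 0 then a k else 0

/-- The adjoint `I*` of the X-ray transform, on Fourier coefficient sequences:
`(I* g)(k) = g(k, v_k)` (for `k = 0`, `g(0, ·)` is constant so the choice `vk 0` is immaterial). -/
def Istar (Q : Set (Fin 2 → ℤ)) (vk : (Fin 2 → ℤ) → Q)
    (g : (Fin 2 → ℤ) → Q → ℂ) (k : Fin 2 → ℤ) : ℂ :=
  g k (vk k)

/-- The squared `H^s(𝕋²)` norm of a Fourier coefficient sequence
(`ℝ≥0∞`-valued, `∞` when the sequence is not in `H^s`):
`‖a‖² = Σ_k ⟨k⟩^{2s} |a k|²`. -/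
def hsNormSq (s : ℝ) (a : (Fin 2 → ℤ) → ℂ) : ℝ≥0∞ :=
  ∑' k : Fin 2 → ℤ, ENNReal.ofReal (nrmSq k ^ s * ‖a k‖ ^ 2)

/-- The squared `H^s(𝕋² × Q)` norm:
`‖g‖² = |g(0,0)|² + Σ_{k ≠ 0} Σ_{v ∈ Q} ⟨k⟩^{2s} |g(k,v)|²`. -/
def hsQNormSq (s : ℝ) (Q : Set (Fin 2 → ℤ)) (vk : (Fin 2 → ℤ) → Q)
    (g : (Fin 2 → ℤ) → Q → ℂ) : ℝ≥0∞ :=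
  ENNReal.ofReal (‖g 0 (vk 0)‖ ^ 2) +
    ∑' (k : {k : Fin 2 → ℤ // k ≠ 0}) (v : Q),
      ENNReal.ofReal (nrmSq k.1 ^ s * ‖g k.1 v‖ ^ 2)

/-- The inner product generating the `H^s(𝕋²)` norm. -/
def hsInner (s : ℝ) (a b : (Fin 2 → ℤ) → ℂ) : ℂ :=
  ∑' k : Fin 2 → ℤ, (Complex.ofReal (nrmSq k ^ s)) * (a k * (starRingEnd ℂ) (b k))

/-- The inner product generating the `H^s(𝕋² × Q)` norm. -/
def hsQInner (s : ℝ) (Q : Set (Fin 2 → ℤ)) (vk : (Fin 2 → ℤ) → Q)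
    (g h : (Fin 2 → ℤ) → Q → ℂ) : ℂ :=
  g 0 (vk 0) * (starRingEnd ℂ) (h 0 (vk 0)) +
    ∑' (k : {k : Fin 2 → ℤ // k ≠ 0}) (v : Q),
      (Complex.ofReal (nrmSq k.1 ^ s)) * (g k.1 v * (starRingEnd ℂ) (h k.1 v))

/-- The Fourier multiplier `P^β_α`, `(P^β_α a)(k) = (1 + α ⟨k⟩^{2β})⁻¹ a(k)`. -/
def Pmul (β : ℝ) (α : ℝ) (a : (Fin 2 → ℤ) → ℂ) (k : Fin 2 → ℤ) : ℂ :=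
  (Complex.ofReal (1 + α * nrmSq k ^ β))⁻¹ * a k

/-! Since `I* I f = f`, the error is `P(I* g) - (f - P f)`. The noise term costs `2s` derivatives
through `|(1 + α⟨k⟩^{2s})⁻¹| ≤ α⁻¹⟨k⟩^{-2s}`, which `r - 2s ≤ t` pays for. The bias multiplier
`x / (1 + x)`, `x = α⟨k⟩^{2s}`, is at most `C(θ) x^θ` with `θ = δ/2s` by weighted AM-GM, so it costs
`θ · 2s = δ` derivatives of `f` and gains the factor `α^θ C(θ)`. -/

open MeasureTheory

lemma div_one_add_le_rpow {θ x : ℝ} (hθ0 : 0 < θ) (hθ1 : θ < 1) (hx : 0 ≤ x) :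
    x / (1 + x) ≤ θ * (θ⁻¹ - 1) ^ (1 - θ) * x ^ θ := by
  have hθ' : 0 < θ⁻¹ - 1 := by linarith [(one_lt_inv₀ hθ0).mpr hθ1]
  have h1θ : 0 < 1 - θ := by linarith
  -- `θ⁻¹ ^ θ * (x / (1 - θ)) ^ (1 - θ) ≤ θ * θ⁻¹ + (1 - θ) * (x / (1 - θ)) = 1 + x`,
  -- whose left side is `x ^ (1 - θ) / (θ * (θ⁻¹ - 1) ^ (1 - θ))`
  have amgm := Real.geom_mean_le_arith_mean2_weighted hθ0.le h1θ.le (inv_nonneg.2 hθ0.le)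
    (div_nonneg hx h1θ.le) (add_sub_cancel θ 1)
  have hgeom : θ⁻¹ ^ θ * (x / (1 - θ)) ^ (1 - θ) = θ⁻¹ * (x / (θ⁻¹ - 1)) ^ (1 - θ) := by
    rw [show x / (θ⁻¹ - 1) = θ * (x / (1 - θ)) by field_simp,
      Real.mul_rpow hθ0.le (div_nonneg hx h1θ.le), Real.inv_rpow hθ0.le, ← mul_assoc,
      Real.rpow_sub hθ0, Real.rpow_one]
    field_simp
  rw [hgeom, show θ * θ⁻¹ + (1 - θ) * (x / (1 - θ)) = 1 + x by field_simp,
    Real.div_rpow hx hθ'.le, inv_mul_le_iff₀ hθ0, div_le_iff₀ (by positivity)] at amgm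
  rw [div_le_iff₀ (by positivity)]
  calc x = x ^ (1 - θ) * x ^ θ := by
        rw [← Real.rpow_add' hx (by simp), sub_add_cancel, Real.rpow_one]
    _ ≤ θ * (1 + x) * (θ⁻¹ - 1) ^ (1 - θ) * x ^ θ := by gcongr
    _ = θ * (θ⁻¹ - 1) ^ (1 - θ) * x ^ θ * (1 + x) := by ring

lemma one_le_nrmSq (k : Fin 2 → ℤ) : 1 ≤ nrmSq k :=
  le_add_of_nonneg_right (by positivity)

lemma nrmSq_pos (k : Fin 2 → ℤ) : 0 < nrmSq k :=
  one_pos.trans_le (one_le_nrmSq k)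

lemma nrmSq_zero : nrmSq 0 = 1 := by
  simp [nrmSq]

lemma norm_Pmul_le {β α : ℝ} (hα : 0 < α) (a : (Fin 2 → ℤ) → ℂ) (k : Fin 2 → ℤ) :
    ‖Pmul β α a k‖ ≤ α⁻¹ * nrmSq k ^ (-β) * ‖a k‖ := by
  have hw : 0 < nrmSq k ^ β := Real.rpow_pos_of_pos (nrmSq_pos k) β
  rw [Pmul, norm_mul, norm_inv, Complex.norm_real, Real.norm_of_nonneg (by positivity),
    Real.rpow_neg (nrmSq_pos k).le, ← mul_inv]
  gcongr
  linarith

lemma norm_sub_Pmul_le {β α θ : ℝ} (hα : 0 ≤ α) (hθ0 : 0 < θ) (hθ1 : θ < 1)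
    (a : (Fin 2 → ℤ) → ℂ) (k : Fin 2 → ℤ) :
    ‖a k - Pmul β α a k‖ ≤ α ^ θ * (θ * (θ⁻¹ - 1) ^ (1 - θ)) * nrmSq k ^ (θ * β) * ‖a k‖ := by
  set x := α * nrmSq k ^ β with hx_def
  have hx : 0 ≤ x := mul_nonneg hα (Real.rpow_nonneg (nrmSq_pos k).le _)
  have hsub : a k - Pmul β α a k = ((x / (1 + x) : ℝ) : ℂ) * a k := by
    have hden : (1 + x : ℂ) ≠ 0 := by exact_mod_cast (by positivity : 1 + x ≠ 0)
    rw [Pmul, ← hx_def]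
    push_cast
    field_simp
    ring
  have hxθ : x ^ θ = α ^ θ * nrmSq k ^ (θ * β) := by
    rw [Real.mul_rpow hα (Real.rpow_nonneg (nrmSq_pos k).le _), ← Real.rpow_mul (nrmSq_pos k).le,
      mul_comm β θ]
  rw [hsub, norm_mul, Complex.norm_real, Real.norm_of_nonneg (div_nonneg hx (by linarith))]
  calc x / (1 + x) * ‖a k‖ ≤ θ * (θ⁻¹ - 1) ^ (1 - θ) * x ^ θ * ‖a k‖ := by
        gcongr
        exact div_one_add_le_rpow hθ0 hθ1 hx
    _ = _ := by rw [hxθ]; ring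

lemma hsNormSq_mono {r r' : ℝ} (h : r ≤ r') (a : (Fin 2 → ℤ) → ℂ) :
    hsNormSq r a ≤ hsNormSq r' a :=
  ENNReal.tsum_le_tsum fun k => ENNReal.ofReal_le_ofReal <|
    mul_le_mul_of_nonneg_right (Real.rpow_le_rpow_of_exponent_le (one_le_nrmSq k) h) (sq_nonneg _)

lemma hsNormSq_eq_tsum_sq (r : ℝ) (a : (Fin 2 → ℤ) → ℂ) :
    hsNormSq r a = ∑' k, ENNReal.ofReal (nrmSq k ^ (r / 2) * ‖a k‖) ^ (2 : ℝ) := by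
  refine tsum_congr fun k => ?_
  rw [ENNReal.rpow_two, ← ENNReal.ofReal_pow (by have := nrmSq_pos k; positivity), mul_pow,
    ← Real.rpow_mul_natCast (nrmSq_pos k).le]
  norm_num

lemma hsNormSq_sub_rpow_le (r : ℝ) (a b : (Fin 2 → ℤ) → ℂ) :
    hsNormSq r (a - b) ^ (1 / 2 : ℝ) ≤ hsNormSq r a ^ (1 / 2 : ℝ) + hsNormSq r b ^ (1 / 2 : ℝ) := by
  set F := fun k => ENNReal.ofReal (nrmSq k ^ (r / 2) * ‖a k‖)
  set G := fun k => ENNReal.ofReal (nrmSq k ^ (r / 2) * ‖b k‖)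
  have hpt : ∀ k, ENNReal.ofReal (nrmSq k ^ (r / 2) * ‖(a - b) k‖) ≤ F k + G k := by
    intro k
    have hw : 0 ≤ nrmSq k ^ (r / 2) := Real.rpow_nonneg (nrmSq_pos k).le _
    rw [← ENNReal.ofReal_add (by positivity) (by positivity), ← mul_add]
    exact ENNReal.ofReal_le_ofReal (mul_le_mul_of_nonneg_left (norm_sub_le _ _) hw)
  have minkowski := ENNReal.lintegral_Lp_add_le (μ := Measure.count)
    (measurable_of_countable F).aemeasurable (measurable_of_countable G).aemeasurable one_le_two
  simp only [lintegral_count, Pi.add_apply] at minkowski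
  simp only [hsNormSq_eq_tsum_sq r]
  calc _ ≤ (∑' k, (F k + G k) ^ (2 : ℝ)) ^ (1 / 2 : ℝ) := by
        gcongr with k
        exact hpt k
    _ ≤ _ := minkowski

lemma hsNormSq_rpow_le_of_norm_le {r m C : ℝ} (hC : 0 ≤ C) {a b : (Fin 2 → ℤ) → ℂ}
    (h : ∀ k, ‖a k‖ ≤ C * nrmSq k ^ m * ‖b k‖) :
    hsNormSq r a ^ (1 / 2 : ℝ) ≤ ENNReal.ofReal C * hsNormSq (r + 2 * m) b ^ (1 / 2 : ℝ) := by
  have hsq : hsNormSq r a ≤ ENNReal.ofReal (C ^ 2) * hsNormSq (r + 2 * m) b := by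
    rw [hsNormSq, hsNormSq, ← ENNReal.tsum_mul_left]
    refine ENNReal.tsum_le_tsum fun k => ?_
    rw [← ENNReal.ofReal_mul (sq_nonneg C)]
    refine ENNReal.ofReal_le_ofReal ?_
    have hw := nrmSq_pos k
    calc nrmSq k ^ r * ‖a k‖ ^ 2 ≤ nrmSq k ^ r * (C * nrmSq k ^ m * ‖b k‖) ^ 2 := by
          gcongr
          exact h k
      _ = C ^ 2 * (nrmSq k ^ (r + 2 * m) * ‖b k‖ ^ 2) := by
          rw [Real.rpow_add hw, two_mul, Real.rpow_add hw]
          ring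
  calc _ ≤ (ENNReal.ofReal (C ^ 2) * hsNormSq (r + 2 * m) b) ^ (1 / 2 : ℝ) := by gcongr
    _ = _ := by
      rw [ENNReal.mul_rpow_of_nonneg _ _ (by norm_num),
        ENNReal.ofReal_rpow_of_nonneg (sq_nonneg C) (by norm_num), ← Real.sqrt_eq_rpow,
        Real.sqrt_sq hC]

lemma Istar_IaQ_add {Q : Set (Fin 2 → ℤ)} {vk : (Fin 2 → ℤ) → Q}
    (hvk : ∀ k : Fin 2 → ℤ, k ≠ 0 → dotZ k (vk k).1 = 0)
    (f : (Fin 2 → ℤ) → ℂ) (g : (Fin 2 → ℤ) → Q → ℂ) :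
    Istar Q vk (fun k v => IaQ Q f k v + g k v) = f + Istar Q vk g := by
  funext k
  have hk : dotZ k (vk k).1 = 0 := by
    rcases eq_or_ne k 0 with rfl | hk
    · simp [dotZ]
    · exact hvk k hk
  simp [Istar, IaQ, hk]

lemma hsNormSq_Istar_le (t : ℝ) (Q : Set (Fin 2 → ℤ)) (vk : (Fin 2 → ℤ) → Q)
    (g : (Fin 2 → ℤ) → Q → ℂ) : hsNormSq t (Istar Q vk g) ≤ hsQNormSq t Q vk g := by
  rw [hsNormSq, ENNReal.tsum_eq_add_tsum_ite 0, hsQNormSq, nrmSq_zero, Real.one_rpow, one_mul]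
  refine add_le_add le_rfl ?_
  calc _ = ∑' k : {k : Fin 2 → ℤ // k ≠ 0}, ENNReal.ofReal (nrmSq k ^ t * ‖g k (vk k)‖ ^ 2) := by
        rw [← tsum_subtype_eq_of_support_subset (s := {k | k ≠ 0})]
        · exact tsum_congr fun k => if_neg k.2
        · intro k hk
          simp_all
    _ ≤ _ := ENNReal.tsum_le_tsum fun k => ENNReal.le_tsum (vk k)

lemma hsNormSq_Pmul_Istar_rpow_le {r t s α : ℝ} (hrts : r ≤ 2 * s + t) (hα : 0 < α)
    (Q : Set (Fin 2 → ℤ)) (vk : (Fin 2 → ℤ) → Q) (g : (Fin 2 → ℤ) → Q → ℂ) :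
    hsNormSq r (Pmul s α (Istar Q vk g)) ^ (1 / 2 : ℝ)
      ≤ ENNReal.ofReal α⁻¹ * hsQNormSq t Q vk g ^ (1 / 2 : ℝ) :=
  calc _ ≤ ENNReal.ofReal α⁻¹ * hsNormSq (r + 2 * -s) (Istar Q vk g) ^ (1 / 2 : ℝ) :=
        hsNormSq_rpow_le_of_norm_le (inv_nonneg.2 hα.le) (norm_Pmul_le hα _)
    _ ≤ _ := by
        gcongr
        exact (hsNormSq_mono (by linarith) _).trans (hsNormSq_Istar_le t Q vk g)

lemma hsNormSq_sub_Pmul_rpow_le {r s δ α : ℝ} (hs : 0 < s) (hδ1 : 0 < δ) (hδ2 : δ < 2 * s)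
    (hα : 0 ≤ α) (f : (Fin 2 → ℤ) → ℂ) :
    hsNormSq r (f - Pmul s α f) ^ (1 / 2 : ℝ)
      ≤ ENNReal.ofReal
          (α ^ (δ / (2 * s)) * ((δ / (2 * s)) * ((δ / (2 * s))⁻¹ - 1) ^ (1 - δ / (2 * s))))
        * hsNormSq (r + δ) f ^ (1 / 2 : ℝ) := by
  set θ := δ / (2 * s)
  have hθ0 : 0 < θ := by positivity
  have hθ1 : θ < 1 := (div_lt_one (by linarith)).mpr hδ2
  have hθ' : 0 ≤ θ⁻¹ - 1 := by linarith [(one_lt_inv₀ hθ0).mpr hθ1]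
  have h := hsNormSq_rpow_le_of_norm_le (r := r) (by positivity)
    (norm_sub_Pmul_le (β := s) hα hθ0 hθ1 f)
  rwa [show r + 2 * (θ * s) = r + δ by simp only [θ]; field_simp] at h

theorem regularization_estimate_general
    (r t s δ : ℝ) (hrts : r ≤ 2*s + t) (hs : 0 < s) (hδ1 : 0 < δ) (hδ2 : δ < 2*s)
    (ε α : ℝ) (hε : 0 < ε) (hα1 : 0 < α)
    (Q : Set (Fin 2 → ℤ))
    (vk : (Fin 2 → ℤ) → Q)
    (hvk : ∀ k : Fin 2 → ℤ, k ≠ 0 →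
      dotZ k (vk k).1 = 0 ∧ ∀ v : Q, dotZ k v.1 = 0 → v = vk k)
    (f : (Fin 2 → ℤ) → ℂ) (hf : hsNormSq (r + δ) f < ⊤)
    (g : (Fin 2 → ℤ) → Q → ℂ)
    (hg : hsQNormSq t Q vk g ≤ ENNReal.ofReal (ε ^ 2)) :
    (hsNormSq r (fun k =>
        Pmul s α (Istar Q vk (fun k' v => IaQ Q f k' v + g k' v)) k - f k)) ^ (1/2 : ℝ)
      ≤ ENNReal.ofReal
          (α ^ (δ/(2*s)) * ((δ/(2*s)) * ((δ/(2*s))⁻¹ - 1) ^ (1 - δ/(2*s))) *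
              ((hsNormSq (r + δ) f) ^ (1/2 : ℝ)).toReal
            + ε / α) := by
  have herror : (fun k => Pmul s α (Istar Q vk (fun k' v => IaQ Q f k' v + g k' v)) k - f k)
      = Pmul s α (Istar Q vk g) - (f - Pmul s α f) := by
    rw [Istar_IaQ_add fun k hk => (hvk k hk).1]
    funext k
    simp only [Pmul, Pi.add_apply, Pi.sub_apply]
    ring
  have hnoise : hsNormSq r (Pmul s α (Istar Q vk g)) ^ (1 / 2 : ℝ) ≤ ENNReal.ofReal (ε / α) :=
    calc _ ≤ ENNReal.ofReal α⁻¹ * ENNReal.ofReal (ε ^ 2) ^ (1 / 2 : ℝ) := by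
          grw [hsNormSq_Pmul_Istar_rpow_le hrts hα1 Q vk g, hg]
      _ = ENNReal.ofReal (ε / α) := by
          rw [ENNReal.ofReal_rpow_of_nonneg (sq_nonneg ε) (by norm_num), ← Real.sqrt_eq_rpow,
            Real.sqrt_sq hε.le, ← ENNReal.ofReal_mul (inv_nonneg.2 hα1.le), inv_mul_eq_div]
  have hθ' : 0 ≤ (δ / (2 * s))⁻¹ - 1 := by
    rw [sub_nonneg, one_le_inv₀ (by positivity)]
    exact (div_le_one (by linarith)).mpr hδ2.le
  have hfin : hsNormSq (r + δ) f ^ (1 / 2 : ℝ) ≠ ⊤ :=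
    (ENNReal.rpow_lt_top_of_nonneg (by norm_num) hf.ne).ne
  rw [herror, ENNReal.ofReal_add (by positivity) (by positivity),
    ENNReal.ofReal_mul (by positivity), ENNReal.ofReal_toReal hfin, add_comm]
  exact (hsNormSq_sub_rpow_le r _ _).trans
    (add_le_add hnoise (hsNormSq_sub_Pmul_rpow_le hs hδ1 hδ2 hα1.le f))

theorem regularization_estimate
    (r t s δ : ℝ) (hrts : r ≤ 2*s + t) (hs : 0 < s) (hδ1 : 0 < δ) (hδ2 : δ < 2*s)
    (ε α : ℝ) (hε : 0 < ε) (hα1 : 0 < α) (hα2 : α ≤ 2*s/δ - 1)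
    (Q : Set (Fin 2 → ℤ))
    (hQ0 : ∀ v ∈ Q, v ≠ 0)
    (hQ : ∀ v : Fin 2 → ℤ, v ≠ 0 → ∃! q, q ∈ Q ∧ ∃ m : ℤ, v = m • q)
    (vk : (Fin 2 → ℤ) → Q)
    (hvk : ∀ k : Fin 2 → ℤ, k ≠ 0 →
      dotZ k (vk k).1 = 0 ∧ ∀ v : Q, dotZ k v.1 = 0 → v = vk k)
    (f : (Fin 2 → ℤ) → ℂ) (hf : hsNormSq (r + δ) f < ⊤)
    (g : (Fin 2 → ℤ) → Q → ℂ)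
    (hg0 : ∀ v w : Q, g 0 v = g 0 w)
    (hg : hsQNormSq t Q vk g ≤ ENNReal.ofReal (ε ^ 2)) :
    (hsNormSq r (fun k =>
        Pmul s α (Istar Q vk (fun k' v => IaQ Q f k' v + g k' v)) k - f k)) ^ (1/2 : ℝ)
      ≤ ENNReal.ofReal
          (α ^ (δ/(2*s)) * ((δ/(2*s)) * ((δ/(2*s))⁻¹ - 1) ^ (1 - δ/(2*s))) *
              ((hsNormSq (r + δ) f) ^ (1/2 : ℝ)).toReal
            + ε / α) :=
  regularization_estimate_general r t s δ hrts hs hδ1 hδ2 ε α hε hα1 Q vk hvk f hf g hg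
end
end
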